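/- arXiv:2009.08569 — 4 statements merged into one kernel-verified Lean document; each statement's English description precedes it below -/
import Mathlib

section
/- Let M ∈ R^{3×3} be symmetric positive semi-definite. Then the matrix M̄ = (1/2)(tr(M)I₃ - M) is positive definite if and only if M has at least two strictly positive eigenvalues. -/
/-!
In an orthonormal eigenbasis of `M` the matrix `M̄` is diagonal with entries
`(tr M - λᵢ) / 2`, i.e. half the sum of the other two eigenvalues. As all eigenvalues are
nonnegative, every such entry is positive exactly when, for each `i`, some eigenvalue other
than `λᵢ` is positive, which is the same as having two positive eigenvalues.
-/

open Matrix
open scoped ComplexOrder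

theorem Finset.lt_sum_univ_iff_exists_ne_pos {ι M : Type*} [Fintype ι] [DecidableEq ι]
    [AddCommMonoid M] [PartialOrder M] [IsOrderedCancelAddMonoid M] {f : ι → M} (hf : 0 ≤ f)
    (i : ι) : f i < ∑ j, f j ↔ ∃ j ≠ i, 0 < f j := by
  rw [← Finset.add_sum_erase _ _ (Finset.mem_univ i), lt_add_iff_pos_right,
    Finset.sum_pos_iff_of_nonneg fun j _ ↦ hf j]
  simp

theorem forall_exists_ne_iff_exists_pair {ι : Type*} [Nonempty ι] {p : ι → Prop} :
    (∀ i, ∃ j ≠ i, p j) ↔ ∃ i j, i ≠ j ∧ p i ∧ p j := by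
  constructor
  · intro h
    obtain ⟨j, -, hj⟩ := h (Classical.arbitrary ι)
    obtain ⟨i, hij, hi⟩ := h j
    exact ⟨i, j, hij, hi, hj⟩
  · rintro ⟨i, j, hij, hi, hj⟩ k
    by_cases hik : i = k
    · exact ⟨j, hik ▸ hij.symm, hj⟩
    · exact ⟨i, hik, hi⟩

namespace Matrix

variable {n 𝕜 : Type*} [RCLike 𝕜]

theorem posDef_real_smul_iff {A : Matrix n n 𝕜} {c : ℝ} (hc : 0 < c) :
    (c • A).PosDef ↔ A.PosDef :=
  ⟨fun h ↦ by simpa [smul_smul, hc.ne'] using h.smul (inv_pos.2 hc), fun h ↦ h.smul hc⟩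

variable [Fintype n] [DecidableEq n]

theorem IsHermitian.posDef_smul_one_sub_iff {A : Matrix n n 𝕜} (hA : A.IsHermitian) (c : ℝ) :
    (c • (1 : Matrix n n 𝕜) - A).PosDef ↔ ∀ i, hA.eigenvalues i < c := by
  have hdiag : diagonal (RCLike.ofReal ∘ fun i ↦ c - hA.eigenvalues i) =
      (c : 𝕜) • (1 : Matrix n n 𝕜) - diagonal (RCLike.ofReal ∘ hA.eigenvalues) := by
    ext i j
    by_cases h : i = j <;> simp [h, sub_smul, Algebra.algebraMap_eq_smul_one]
  have hconj : c • (1 : Matrix n n 𝕜) - A =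
      Unitary.conjStarAlgAut 𝕜 _ hA.eigenvectorUnitary
        (diagonal (RCLike.ofReal ∘ fun i ↦ c - hA.eigenvalues i)) := by
    conv_lhs => rw [hA.spectral_theorem]
    rw [hdiag, map_sub, map_smul, map_one, RCLike.real_smul_eq_coe_smul (K := 𝕜)]
  rw [hconj, Unitary.conjStarAlgAut_apply, Unitary.isUnit_coe.posDef_star_right_conjugate_iff,
    posDef_diagonal_iff]
  simp [sub_pos]

end Matrix

/-- For symmetric PSD `M ∈ ℝ³ˣ³`, `M̄ = (1/2)(tr(M)I₃ - M)` is positive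
definite iff `M` has at least two strictly positive eigenvalues. -/
theorem Mbar_posdef_iff (M : Matrix (Fin 3) (Fin 3) ℝ)
    (hpsd : M.PosSemidef) (hherm : M.IsHermitian) :
    ((2 : ℝ)⁻¹ • (M.trace • (1 : Matrix (Fin 3) (Fin 3) ℝ) - M)).PosDef ↔
      ∃ i j : Fin 3, i ≠ j ∧ 0 < hherm.eigenvalues i ∧ 0 < hherm.eigenvalues j := by
  have htrace : M.trace = ∑ i, hherm.eigenvalues i := by
    simpa using hherm.trace_eq_sum_eigenvalues
  rw [posDef_real_smul_iff (by norm_num), hherm.posDef_smul_one_sub_iff, htrace,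
    ← forall_exists_ne_iff_exists_pair]
  exact forall_congr' <| Finset.lt_sum_univ_iff_exists_ne_pos hpsd.eigenvalues_nonneg
end

section
/- Let R̃ ∈ SO(3) and M ∈ R^{3×3} symmetric positive semi-definite with M̄ = (1/2)(tr(M)I₃ - M) positive definite. If ψ(MR̃) = 0 and R̃ ≠ I₃, then R̃ is a rotation by angle π about an eigenvector of M. -/
open Matrix

noncomputable section

def SO3 (R : Matrix (Fin 3) (Fin 3) ℝ) : Prop :=
  Rᵀ * R = 1 ∧ R * Rᵀ = 1 ∧ R.det = 1

def psi (A : Matrix (Fin 3) (Fin 3) ℝ) : Fin 3 → ℝ :=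
  (2 : ℝ)⁻¹ • ![A 2 1 - A 1 2, A 0 2 - A 2 0, A 1 0 - A 0 1]

/-!
`ψ(MR) = 0` says that `MR` is symmetric, hence so is `RM = R (MR) Rᵀ`. For symmetric `M` the
skew part of `MA + AM` is that of `[(tr M • I - M) ψ(A)]×`, so `(tr M • I - M) ψ(R) = 0`, and
positive definiteness of `M̄` forces `ψ(R) = 0`: `R` is a symmetric rotation, i.e. `R² = I`.
For a rotation `adj R = Rᵀ = R`, and the `3 × 3` identity
`adj R = R² - t R + ½(t² - tr R²) I` (`t = tr R`) becomes `(1 + t) R = ½(t² - 1) I`; its trace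
gives `t ∈ {-1, 3}`, and `t = 3` means `R = I`. So `P = (R + I)/2` is a symmetric idempotent
of trace `1`, hence `P = uuᵀ` for a unit vector `u`, which is an eigenvector of `M` because
`M` commutes with `R`.
-/

theorem psi_add (A B : Matrix (Fin 3) (Fin 3) ℝ) : psi (A + B) = psi A + psi B := by
  simp only [psi, Matrix.add_apply, ← smul_add, add_sub_add_comm, cons_add_cons, empty_add_empty]

theorem psi_eq_zero_iff {A : Matrix (Fin 3) (Fin 3) ℝ} : psi A = 0 ↔ Aᵀ = A := by
  rw [← Matrix.IsSymm, Matrix.IsSymm.ext_iff]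
  simp only [psi, smul_eq_zero, inv_eq_zero, two_ne_zero, false_or, funext_iff,
    Fin.forall_fin_succ, Pi.zero_apply, cons_val_zero, cons_val_succ, sub_eq_zero,
    Fin.succ_zero_eq_one, Fin.succ_one_eq_two, IsEmpty.forall_iff, cons_val_fin_one]
  grind

theorem psi_mul_add_mul {M : Matrix (Fin 3) (Fin 3) ℝ} (hM : Mᵀ = M)
    (A : Matrix (Fin 3) (Fin 3) ℝ) :
    psi (M * A + A * M) = (M.trace • 1 - M) *ᵥ psi A := by
  have h := Matrix.IsSymm.ext_iff.1 hM
  ext k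
  fin_cases k <;>
    simp only [psi, mulVec, dotProduct, Fin.sum_univ_three, mul_apply, trace_fin_three, one_apply,
      Matrix.add_apply, Matrix.sub_apply, Matrix.smul_apply, Pi.smul_apply, smul_eq_mul, cons_val,
      cons_val_zero, cons_val_one, Fin.reduceFinMk, Fin.zero_eta, Fin.mk_one, Fin.isValue,
      Fin.reduceEq, ↓reduceIte] <;>
    rw [h 1 0, h 2 0, h 2 1] <;> ring

theorem transpose_eq_self_of_psi_mul_eq_zero {R M : Matrix (Fin 3) (Fin 3) ℝ}
    (hR : R * Rᵀ = 1) (hM : Mᵀ = M)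
    (hMbar : ((2 : ℝ)⁻¹ • (M.trace • (1 : Matrix (Fin 3) (Fin 3) ℝ) - M)).PosDef)
    (hcrit : psi (M * R) = 0) : Rᵀ = R := by
  have hMR : (M * R)ᵀ = M * R := psi_eq_zero_iff.1 hcrit
  have hRM : psi (R * M) = 0 := by
    have hconj : R * M = R * (M * R) * Rᵀ := by simp [Matrix.mul_assoc, hR]
    rw [psi_eq_zero_iff, hconj, transpose_mul, transpose_mul, transpose_transpose, hMR]
    exact (Matrix.mul_assoc _ _ _).symm
  have hker : ((2 : ℝ)⁻¹ • (M.trace • 1 - M)) *ᵥ psi R = 0 := by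
    rw [Matrix.smul_mulVec, ← psi_mul_add_mul hM, psi_add, hcrit, hRM, add_zero, smul_zero]
  have hpsi : psi R = 0 := by
    by_contra hne
    simpa [hker] using hMbar.dotProduct_mulVec_pos hne
  exact psi_eq_zero_iff.1 hpsi

theorem adjugate_fin_three_eq (A : Matrix (Fin 3) (Fin 3) ℝ) :
    A.adjugate = A * A - A.trace • A + ((A.trace ^ 2 - (A * A).trace) / 2) • 1 := by
  ext i j
  fin_cases i <;> fin_cases j <;>
    simp only [adjugate_fin_three, of_apply, cons_val', cons_val, cons_val_zero, cons_val_one,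
      cons_val_fin_one, trace_fin_three, mul_apply, Fin.sum_univ_three, Matrix.add_apply,
      Matrix.sub_apply, Matrix.smul_apply, smul_eq_mul, one_apply, Fin.reduceFinMk, Fin.zero_eta,
      Fin.mk_one, Fin.isValue, Fin.reduceEq, ↓reduceIte] <;> ring

theorem trace_eq_neg_one_of_mul_self_eq_one {R : Matrix (Fin 3) (Fin 3) ℝ}
    (hR : R * R = 1) (hdet : R.det = 1) (hne : R ≠ 1) : R.trace = -1 := by
  set t := R.trace
  have hadj : R.adjugate = R := by
    calc R.adjugate = R * (R * R.adjugate) := by rw [← Matrix.mul_assoc, hR, Matrix.one_mul]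
      _ = R := by rw [mul_adjugate, hdet, one_smul, Matrix.mul_one]
  have hlin : (1 + t) • R = ((t ^ 2 - 1) / 2) • (1 : Matrix (Fin 3) (Fin 3) ℝ) := by
    have h := adjugate_fin_three_eq R
    rw [hadj, hR, trace_one, Fintype.card_fin] at h
    linear_combination (norm := module) h
  have htr := congrArg trace hlin
  rw [trace_smul, trace_smul, trace_one, Fintype.card_fin, smul_eq_mul, smul_eq_mul,
    Nat.cast_ofNat] at htr
  have ht : (t + 1) * (t - 3) = 0 := by linear_combination -2 * htr
  rcases mul_eq_zero.1 ht with h | h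
  · linarith
  · refine absurd ?_ hne
    rw [show t = 3 by linarith] at hlin
    exact smul_right_injective _ (by norm_num : (1 + 3 : ℝ) ≠ 0) (hlin.trans (by norm_num))

theorem eq_zero_of_isSymm_of_mul_self_of_trace_eq_zero {n : Type*} [Fintype n]
    {Q : Matrix n n ℝ} (hsym : Q.IsSymm) (hidem : Q * Q = Q) (htr : Q.trace = 0) : Q = 0 := by
  rw [← trace_conjTranspose_mul_self_eq_zero_iff, conjTranspose_eq_transpose_of_trivial, hsym.eq,
    hidem, htr]

theorem exists_vecMulVec_self_eq_of_isSymm_of_mul_self_of_trace_eq_one {n : Type*} [Fintype n]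
    {P : Matrix n n ℝ} (hsym : P.IsSymm) (hidem : P * P = P) (htr : P.trace = 1) :
    ∃ u : n → ℝ, u ⬝ᵥ u = 1 ∧ vecMulVec u u = P := by
  have hdiag : ∑ i, P i i = 1 := htr
  obtain ⟨j, -, hj⟩ : ∃ j ∈ Finset.univ, (0 : ℝ) < P j j :=
    Finset.exists_lt_of_sum_lt (by simp [hdiag])
  set w : n → ℝ := fun i => P i j
  have hw : w ⬝ᵥ w = P j j := by
    rw [← congrFun₂ hidem j j, mul_apply]
    exact Finset.sum_congr rfl fun k _ => by rw [hsym.apply]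
  have hPw : P *ᵥ w = w := funext fun i => congrFun₂ hidem i j
  set u := (√(P j j))⁻¹ • w
  have hu : u ⬝ᵥ u = 1 := by
    rw [dotProduct_smul, smul_dotProduct, hw, smul_smul, smul_eq_mul, ← mul_inv,
      Real.mul_self_sqrt hj.le, inv_mul_cancel₀ hj.ne']
  have hPu : P *ᵥ u = u := by rw [mulVec_smul, hPw]
  have huP : u ᵥ* P = u := by rw [← mulVec_transpose, hsym.eq, hPu]
  refine ⟨u, hu, (sub_eq_zero.1 (eq_zero_of_isSymm_of_mul_self_of_trace_eq_zero ?_ ?_ ?_)).symm⟩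
  · exact hsym.sub (Matrix.IsSymm.ext fun i k => by simp [vecMulVec_apply, mul_comm])
  · simp only [sub_mul, mul_sub, hidem, mul_vecMulVec, vecMulVec_mul, vecMulVec_mulVec,
      op_smul_eq_smul, hPu, huP, hu, one_smul]
    abel
  · rw [trace_sub, htr, trace_vecMulVec, hu, sub_self]

theorem mulVec_eq_smul_of_commute_vecMulVec {n : Type*} [Fintype n] {M : Matrix n n ℝ}
    {u : n → ℝ} (hu : u ⬝ᵥ u = 1) (hcomm : Commute M (vecMulVec u u)) :
    M *ᵥ u = (u ⬝ᵥ M *ᵥ u) • u := by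
  have hproj : ∀ v, vecMulVec u u *ᵥ v = (u ⬝ᵥ v) • u := fun v => by
    rw [vecMulVec_mulVec, op_smul_eq_smul]
  calc M *ᵥ u = M *ᵥ (vecMulVec u u *ᵥ u) := by rw [hproj, hu, one_smul]
    _ = vecMulVec u u *ᵥ (M *ᵥ u) := by rw [mulVec_mulVec, hcomm.eq, ← mulVec_mulVec]
    _ = (u ⬝ᵥ M *ᵥ u) • u := hproj _

theorem critical_points_are_pi_rotations_general
    (Rt M : Matrix (Fin 3) (Fin 3) ℝ) (hR : SO3 Rt)
    (hMsym : Mᵀ = M)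
    (hMbar : ((2 : ℝ)⁻¹ • (M.trace • (1 : Matrix (Fin 3) (Fin 3) ℝ) - M)).PosDef)
    (hcrit : psi (M * Rt) = 0) (hne : Rt ≠ 1) :
    ∃ u : Fin 3 → ℝ, u ⬝ᵥ u = 1 ∧ (∃ μ : ℝ, M.mulVec u = μ • u) ∧
      Rt = (2 : ℝ) • vecMulVec u u - 1 := by
  obtain ⟨hRtR, hRRt, hdet⟩ := hR
  have hsym : Rtᵀ = Rt := transpose_eq_self_of_psi_mul_eq_zero hRRt hMsym hMbar hcrit
  have hinv : Rt * Rt = 1 := by rwa [hsym] at hRtR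
  have hcomm : Commute M Rt := by
    have hMR : (M * Rt)ᵀ = M * Rt := psi_eq_zero_iff.1 hcrit
    rw [transpose_mul, hsym, hMsym] at hMR
    exact hMR.symm
  set P : Matrix (Fin 3) (Fin 3) ℝ := (2 : ℝ)⁻¹ • (Rt + 1)
  have hPsym : P.IsSymm := (IsSymm.add hsym transpose_one).smul _
  have hPidem : P * P = P := by
    simp only [P, smul_mul_smul, add_mul, mul_add, hinv, Matrix.mul_one, Matrix.one_mul]
    module
  have hPtr : P.trace = 1 := by
    simp only [P, trace_smul, trace_add, trace_eq_neg_one_of_mul_self_eq_one hinv hdet hne,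
      trace_one, Fintype.card_fin]
    norm_num
  obtain ⟨u, hu, huP⟩ :=
    exists_vecMulVec_self_eq_of_isSymm_of_mul_self_of_trace_eq_one hPsym hPidem hPtr
  have hMP : Commute M (vecMulVec u u) :=
    huP ▸ (hcomm.add_right (Commute.one_right M)).smul_right _
  refine ⟨u, hu, ⟨_, mulVec_eq_smul_of_commute_vecMulVec hu hMP⟩, ?_⟩
  rw [huP]
  module

/-- If `R̃ ∈ SO(3)`, `M` is symmetric PSD with `M̄ = (1/2)(tr(M)I - M)` positive
definite, `ψ(MR̃) = 0` and `R̃ ≠ I`, then `R̃` is a rotation by angle `π` about a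
unit eigenvector `u` of `M`, i.e. `R̃ = 2uuᵀ - I`. -/
theorem critical_points_are_pi_rotations
    (Rt M : Matrix (Fin 3) (Fin 3) ℝ) (hR : SO3 Rt)
    (hMsym : Mᵀ = M) (hMpsd : M.PosSemidef)
    (hMbar : ((2 : ℝ)⁻¹ • (M.trace • (1 : Matrix (Fin 3) (Fin 3) ℝ) - M)).PosDef)
    (hcrit : psi (M * Rt) = 0) (hne : Rt ≠ 1) :
    ∃ u : Fin 3 → ℝ, u ⬝ᵥ u = 1 ∧ (∃ μ : ℝ, M.mulVec u = μ • u) ∧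
      Rt = (2 : ℝ) • vecMulVec u u - 1 :=
  critical_points_are_pi_rotations_general Rt M hR hMsym hMbar hcrit hne
end
end

section
/- Consider the hybrid linear system x' = Ax on intervals [t_{k-1}, t_k] and jumps x⁺ = (I - KC)x at times t_k, with T_m ≤ t_k - t_{k-1} ≤ T_M. Suppose there exists a symmetric positive definite P ∈ R^{6×6} such that (I-KC)^T Φ(τ)^T P Φ(τ)(I-KC) - P < 0 for all τ ∈ [T_m, T_M], where Φ(τ) = exp(Aτ). Then every solution converges exponentially to zero. -/
/-!
With `V v = vᵀ P v`, the LMI says that one jump followed by one flow of length `τ ∈ [T_m, T_M]`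
strictly decreases `V`; both sides of that inequality are quadratic forms, so compactness of
`[T_m, T_M] × (unit sphere)` turns it into a uniform contraction `V ↦ ρ V` with `ρ < 1`. Since `V`
is comparable to `‖·‖²`, the states just before the jumps decay like `ρ^(k/2)`. Any other state is
`exp((s - t_{k+1}) A)` applied to the next pre-jump state with `|s - t_{k+1}| ≤ T_M`, and
`t_k ≤ k T_M` turns decay in `k` into exponential decay in time.
-/

open Matrix Set Function

section Homogeneous

variable {X E : Type*} [TopologicalSpace X] [NormedAddCommGroup E] [NormedSpace ℝ E]

lemma eq_norm_sq_mul_apply_inv_norm_smul {f : E → ℝ} (hf : ∀ (c : ℝ) v, f (c • v) = c ^ 2 * f v)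
    (v : E) : f v = ‖v‖ ^ 2 * f (‖v‖⁻¹ • v) := by
  rw [← hf, smul_smul]
  rcases eq_or_ne v 0 with rfl | hv
  · simp
  · rw [mul_inv_cancel₀ (norm_ne_zero_iff.2 hv), one_smul]

lemma inv_norm_smul_mem_unit_sphere {v : E} (hv : v ≠ 0) :
    ‖v‖⁻¹ • v ∈ Metric.sphere (0 : E) 1 := by
  simpa using norm_smul_inv_norm (𝕜 := ℝ) hv

variable [FiniteDimensional ℝ E]

lemma exists_pos_mul_norm_sq_le_of_homogeneous {S : Set X} (hS : IsCompact S) {f : X → E → ℝ}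
    (hf : Continuous (uncurry f)) (hhom : ∀ p (c : ℝ) v, f p (c • v) = c ^ 2 * f p v)
    (hpos : ∀ p ∈ S, ∀ v ≠ 0, 0 < f p v) :
    ∃ m, 0 < m ∧ ∀ p ∈ S, ∀ v, m * ‖v‖ ^ 2 ≤ f p v := by
  obtain ⟨m, hm, hmin⟩ := (hS.prod (isCompact_sphere (0 : E) 1)).exists_forall_le'
    hf.continuousOn (a := 0) fun q hq ↦ hpos q.1 hq.1 q.2 (Metric.ne_of_mem_sphere hq.2 one_ne_zero)
  refine ⟨m, hm, fun p hp v ↦ ?_⟩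
  rw [eq_norm_sq_mul_apply_inv_norm_smul (hhom p) v, mul_comm]
  rcases eq_or_ne v 0 with rfl | hv
  · simp
  exact mul_le_mul_of_nonneg_left (hmin (p, _) ⟨hp, inv_norm_smul_mem_unit_sphere hv⟩) (sq_nonneg _)

lemma exists_le_mul_norm_sq_of_homogeneous {f : E → ℝ} (hf : Continuous f)
    (hhom : ∀ (c : ℝ) v, f (c • v) = c ^ 2 * f v) :
    ∃ M, 0 < M ∧ ∀ v, f v ≤ M * ‖v‖ ^ 2 := by
  obtain ⟨M, hM⟩ := (isCompact_sphere (0 : E) 1).exists_bound_of_continuousOn hf.continuousOn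
  refine ⟨max M 1, by positivity, fun v ↦ ?_⟩
  rw [eq_norm_sq_mul_apply_inv_norm_smul hhom v, mul_comm]
  rcases eq_or_ne v 0 with rfl | hv
  · simp
  refine mul_le_mul_of_nonneg_right ?_ (sq_nonneg _)
  exact (le_abs_self _).trans ((hM _ (inv_norm_smul_mem_unit_sphere hv)).trans (le_max_left _ _))

end Homogeneous

section QuadraticForm

variable {ι : Type*} [Fintype ι]

lemma smul_dotProduct_mulVec_smul (P : Matrix ι ι ℝ) (c : ℝ) (v : ι → ℝ) :
    c • v ⬝ᵥ P *ᵥ (c • v) = c ^ 2 * (v ⬝ᵥ P *ᵥ v) := by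
  simp only [mulVec_smul, smul_dotProduct, dotProduct_smul, smul_eq_mul]
  ring

lemma continuous_dotProduct_mulVec (P : Matrix ι ι ℝ) :
    Continuous fun v : ι → ℝ ↦ v ⬝ᵥ P *ᵥ v :=
  continuous_id.dotProduct (continuous_const.matrix_mulVec continuous_id)

lemma dotProduct_transpose_mul_mul_mulVec (H P : Matrix ι ι ℝ) (v : ι → ℝ) :
    v ⬝ᵥ (Hᵀ * P * H) *ᵥ v = H *ᵥ v ⬝ᵥ P *ᵥ (H *ᵥ v) := by
  rw [mul_assoc, ← mulVec_mulVec, ← mulVec_mulVec, dotProduct_mulVec, vecMul_transpose]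

lemma Matrix.PosDef.exists_pos_mul_norm_sq_le {P : Matrix ι ι ℝ} (hP : P.PosDef) :
    ∃ m, 0 < m ∧ ∀ v, m * ‖v‖ ^ 2 ≤ v ⬝ᵥ P *ᵥ v := by
  obtain ⟨m, hm, hle⟩ := exists_pos_mul_norm_sq_le_of_homogeneous (S := univ) isCompact_univ
    (f := fun (_ : Unit) v ↦ v ⬝ᵥ P *ᵥ v) ((continuous_dotProduct_mulVec P).comp continuous_snd)
    (fun _ ↦ smul_dotProduct_mulVec_smul P) fun _ _ v hv ↦ by
      simpa using hP.dotProduct_mulVec_pos hv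
  exact ⟨m, hm, hle () trivial⟩

lemma exists_lt_one_of_posDef_sub_transpose_mul_mul {X : Type*} [TopologicalSpace X] {S : Set X}
    (hS : IsCompact S) {P : Matrix ι ι ℝ} {H : X → Matrix ι ι ℝ} (hH : Continuous H)
    (hLMI : ∀ p ∈ S, (P - (H p)ᵀ * P * H p).PosDef) :
    ∃ ρ, 0 < ρ ∧ ρ < 1 ∧ ∀ p ∈ S, ∀ v, H p *ᵥ v ⬝ᵥ P *ᵥ (H p *ᵥ v) ≤ ρ * (v ⬝ᵥ P *ᵥ v) := by
  obtain ⟨ε, hε, hεle⟩ := exists_pos_mul_norm_sq_le_of_homogeneous hS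
    (f := fun p v ↦ v ⬝ᵥ P *ᵥ v - H p *ᵥ v ⬝ᵥ P *ᵥ (H p *ᵥ v))
    (((continuous_dotProduct_mulVec P).comp continuous_snd).sub
      ((continuous_dotProduct_mulVec P).comp
        ((hH.comp continuous_fst).matrix_mulVec continuous_snd)))
    (fun p c v ↦ by
      rw [mulVec_smul (H p), smul_dotProduct_mulVec_smul, smul_dotProduct_mulVec_smul, mul_sub])
    fun p hp v hv ↦ by
      simpa [sub_mulVec, dotProduct_transpose_mul_mul_mulVec] using
        (hLMI p hp).dotProduct_mulVec_pos hv
  obtain ⟨M, hM, hMle⟩ := exists_le_mul_norm_sq_of_homogeneous (continuous_dotProduct_mulVec P)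
    (smul_dotProduct_mulVec_smul P)
  -- `2 * ε ≤ M'` keeps `1 - ε / M'` positive
  set M' := max M (2 * ε)
  have hM' : 0 < M' := lt_max_of_lt_left hM
  refine ⟨1 - ε / M', ?_, by linarith [div_pos hε hM'], fun p hp v ↦ ?_⟩
  · rw [sub_pos, div_lt_one hM']
    linarith [le_max_right M (2 * ε)]
  have hV : v ⬝ᵥ P *ᵥ v ≤ M' * ‖v‖ ^ 2 :=
    (hMle v).trans (mul_le_mul_of_nonneg_right (le_max_left _ _) (sq_nonneg _))
  have hεV : ε / M' * (v ⬝ᵥ P *ᵥ v) ≤ ε * ‖v‖ ^ 2 := by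
    calc ε / M' * (v ⬝ᵥ P *ᵥ v) ≤ ε / M' * (M' * ‖v‖ ^ 2) := by gcongr
      _ = ε * ‖v‖ ^ 2 := by field_simp
  linarith [hεle p hp v]

end QuadraticForm

section MatrixExp

variable {ι : Type*} [Fintype ι]

open scoped Norms.Operator in
lemma exists_norm_mulVec_le_of_continuousOn {X κ : Type*} [TopologicalSpace X] [Fintype κ]
    {S : Set X} (hS : IsCompact S) {M : X → Matrix κ ι ℝ} (hM : ContinuousOn M S) :
    ∃ B, 0 < B ∧ ∀ p ∈ S, ∀ v, ‖M p *ᵥ v‖ ≤ B * ‖v‖ := by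
  obtain ⟨B, hB⟩ := hS.exists_bound_of_continuousOn hM
  refine ⟨max B 1, by positivity, fun p hp v ↦ ?_⟩
  exact (linfty_opNorm_mulVec _ v).trans
    (mul_le_mul_of_nonneg_right ((hB p hp).trans (le_max_left _ _)) (norm_nonneg v))

variable [DecidableEq ι]

open scoped Norms.Operator in
lemma continuous_exp_smul (A : Matrix ι ι ℝ) : Continuous fun τ : ℝ ↦ NormedSpace.exp (τ • A) :=
  NormedSpace.exp_continuous.comp (continuous_id.smul continuous_const)

open scoped Norms.Operator in
lemma hasDerivAt_exp_sub_smul_mulVec (A : Matrix ι ι ℝ) (a : ℝ) (w : ι → ℝ) (s : ℝ) :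
    HasDerivAt (fun s ↦ NormedSpace.exp ((s - a) • A) *ᵥ w)
      (A *ᵥ (NormedSpace.exp ((s - a) • A) *ᵥ w)) s := by
  let L : Matrix ι ι ℝ →L[ℝ] ι → ℝ :=
    LinearMap.toContinuousLinearMap (LinearMap.applyₗ w ∘ₗ Matrix.toLin'.toLinearMap)
  have hexp := (hasDerivAt_exp_smul_const' A (s - a)).scomp s ((hasDerivAt_id s).sub_const a)
  rw [one_smul] at hexp
  rw [mulVec_mulVec]
  exact L.hasFDerivAt.comp_hasDerivAt s hexp

lemma eq_exp_smul_mulVec_of_hasDerivAt {A : Matrix ι ι ℝ} {f : ℝ → ι → ℝ} {a b : ℝ}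
    (hf : ∀ s ∈ Icc a b, HasDerivAt f (A *ᵥ f s) s) :
    ∀ s ∈ Icc a b, f s = NormedSpace.exp ((s - a) • A) *ᵥ f a := by
  refine ODE_solution_unique (v := fun _ ↦ (A *ᵥ ·))
    (fun _ ↦ (LinearMap.toContinuousLinearMap A.mulVecLin).lipschitz)
    (fun s hs ↦ (hf s hs).continuousAt.continuousWithinAt)
    (fun s hs ↦ (hf s (Ico_subset_Icc_self hs)).hasDerivWithinAt)
    (fun s _ ↦ (hasDerivAt_exp_sub_smul_mulVec A a (f a) s).continuousAt.continuousWithinAt)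
    (fun s _ ↦ (hasDerivAt_exp_sub_smul_mulVec A a (f a) s).hasDerivWithinAt) ?_
  simp

lemma eq_exp_sub_right_smul_mulVec_of_hasDerivAt {A : Matrix ι ι ℝ} {f : ℝ → ι → ℝ} {a b : ℝ}
    (hf : ∀ s ∈ Icc a b, HasDerivAt f (A *ᵥ f s) s) :
    ∀ s ∈ Icc a b, f s = NormedSpace.exp ((s - b) • A) *ᵥ f b := by
  intro s hs
  rw [eq_exp_smul_mulVec_of_hasDerivAt hf s hs,
    eq_exp_smul_mulVec_of_hasDerivAt hf b (right_mem_Icc.2 (hs.1.trans hs.2)), mulVec_mulVec,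
    ← Matrix.exp_add_of_commute _ _ (((Commute.refl A).smul_left _).smul_right _), ← add_smul,
    sub_add_sub_cancel]

end MatrixExp

lemma norm_le_mul_pow_of_lyapunov {E : Type*} [SeminormedAddCommGroup E] {V : E → ℝ} {m M r : ℝ}
    (hm : 0 < m) (hr : 0 ≤ r) (hlow : ∀ v, m * ‖v‖ ^ 2 ≤ V v) (hup : ∀ v, V v ≤ M * ‖v‖ ^ 2)
    {z : ℕ → E} (hz : ∀ k, V (z (k + 1)) ≤ r ^ 2 * V (z k)) (k : ℕ) :
    ‖z k‖ ≤ √(M / m) * r ^ k * ‖z 0‖ := by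
  have hVk : V (z k) ≤ (r ^ k) ^ 2 * V (z 0) := by
    induction k with
    | zero => simp
    | succ k ih =>
      calc V (z (k + 1)) ≤ r ^ 2 * V (z k) := hz k
        _ ≤ r ^ 2 * ((r ^ k) ^ 2 * V (z 0)) := by gcongr
        _ = (r ^ (k + 1)) ^ 2 * V (z 0) := by ring
  have hsq : ‖z k‖ ^ 2 ≤ M / m * (r ^ k) ^ 2 * ‖z 0‖ ^ 2 := by
    rw [div_mul_eq_mul_div, div_mul_eq_mul_div, le_div_iff₀ hm]
    calc ‖z k‖ ^ 2 * m ≤ V (z k) := by linarith [hlow (z k)]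
      _ ≤ (r ^ k) ^ 2 * V (z 0) := hVk
      _ ≤ (r ^ k) ^ 2 * (M * ‖z 0‖ ^ 2) := by gcongr; exact hup _
      _ = M * (r ^ k) ^ 2 * ‖z 0‖ ^ 2 := by ring
  calc ‖z k‖ = √(‖z k‖ ^ 2) := (Real.sqrt_sq (norm_nonneg _)).symm
    _ ≤ √(M / m * (r ^ k) ^ 2 * ‖z 0‖ ^ 2) := Real.sqrt_le_sqrt hsq
    _ = √(M / m) * r ^ k * ‖z 0‖ := by
      rw [Real.sqrt_mul' _ (by positivity), Real.sqrt_mul' _ (by positivity),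
        Real.sqrt_sq (by positivity), Real.sqrt_sq (norm_nonneg _)]

lemma pow_le_exp_neg_mul_of_le_mul {r T s : ℝ} (hr₀ : 0 < r) (hr₁ : r ≤ 1) (hT : 0 < T) {k : ℕ}
    (hs : s ≤ k * T) : r ^ k ≤ Real.exp (-(-Real.log r / T) * s) := by
  have hlog : Real.log r / T ≤ 0 :=
    div_nonpos_of_nonpos_of_nonneg (Real.log_nonpos hr₀.le hr₁) hT.le
  rw [← Real.exp_log (pow_pos hr₀ k), Real.log_pow, Real.exp_le_exp, neg_div, neg_neg]
  calc k * Real.log r = Real.log r / T * (k * T) := by field_simp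
    _ ≤ Real.log r / T * s := mul_le_mul_of_nonpos_left hs hlog

lemma le_natCast_mul_of_sub_le {t : ℕ → ℝ} {T : ℝ} (h0 : t 0 = 0)
    (hstep : ∀ k, t (k + 1) - t k ≤ T) (k : ℕ) : t k ≤ k * T := by
  induction k with
  | zero => simp [h0]
  | succ k ih => push_cast; linarith [hstep k]

section HybridArcs

variable {ι : Type*} [Fintype ι] [DecidableEq ι] {A J : Matrix ι ι ℝ} {t : ℕ → ℝ}
  {x : ℕ → ℝ → ι → ℝ}

lemma pre_jump_succ_eq_exp_smul_mul_mulVec (hlen : ∀ k, t k ≤ t (k + 1))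
    (hflow : ∀ k, ∀ s ∈ Icc (t k) (t (k + 1)), HasDerivAt (x k) (A *ᵥ x k s) s)
    (hjump : ∀ k, x (k + 1) (t (k + 1)) = J *ᵥ x k (t (k + 1))) (k : ℕ) :
    x (k + 1) (t (k + 2)) =
      (NormedSpace.exp ((t (k + 2) - t (k + 1)) • A) * J) *ᵥ x k (t (k + 1)) := by
  rw [← mulVec_mulVec, ← hjump]
  exact eq_exp_smul_mulVec_of_hasDerivAt (hflow (k + 1)) _ ⟨hlen (k + 1), le_rfl⟩

lemma norm_hybrid_le_mul_pow {V : (ι → ℝ) → ℝ} {m M r B T : ℝ} (hm : 0 < m) (hr : 0 ≤ r)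
    (hlow : ∀ v, m * ‖v‖ ^ 2 ≤ V v) (hup : ∀ v, V v ≤ M * ‖v‖ ^ 2) (hB : 0 ≤ B)
    (hflowB : ∀ σ ∈ Icc (-T) T, ∀ v, ‖NormedSpace.exp (σ • A) *ᵥ v‖ ≤ B * ‖v‖)
    (hlen : ∀ k, t k ≤ t (k + 1)) (hstep : ∀ k, t (k + 1) - t k ≤ T)
    (hflow : ∀ k, ∀ s ∈ Icc (t k) (t (k + 1)), HasDerivAt (x k) (A *ᵥ x k s) s)
    (hjump : ∀ k, x (k + 1) (t (k + 1)) = J *ᵥ x k (t (k + 1)))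
    (hV : ∀ k v, V ((NormedSpace.exp ((t (k + 2) - t (k + 1)) • A) * J) *ᵥ v) ≤ r ^ 2 * V v)
    (k : ℕ) (s : ℝ) (hs : s ∈ Icc (t k) (t (k + 1))) :
    ‖x k s‖ ≤ B * √(M / m) * B * r ^ k * ‖x 0 (t 0)‖ := by
  have hpre := norm_le_mul_pow_of_lyapunov hm hr hlow hup (z := fun k ↦ x k (t (k + 1)))
    fun k ↦ by simpa only [pre_jump_succ_eq_exp_smul_mul_mulVec hlen hflow hjump k] using hV k _
  have hpre₀ : ‖x 0 (t 1)‖ ≤ B * ‖x 0 (t 0)‖ := by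
    rw [eq_exp_smul_mulVec_of_hasDerivAt (hflow 0) _ ⟨hlen 0, le_rfl⟩]
    exact hflowB _ ⟨by linarith [hlen 0, hstep 0], hstep 0⟩ _
  calc ‖x k s‖ ≤ B * ‖x k (t (k + 1))‖ := by
        rw [eq_exp_sub_right_smul_mulVec_of_hasDerivAt (hflow k) s hs]
        exact hflowB _ ⟨by linarith [hs.1, hstep k], by linarith [hs.2, hlen k, hstep k]⟩ _
    _ ≤ B * (√(M / m) * r ^ k * (B * ‖x 0 (t 0)‖)) := by
        gcongr
        exact (hpre k).trans (by gcongr)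
    _ = B * √(M / m) * B * r ^ k * ‖x 0 (t 0)‖ := by ring

end HybridArcs

theorem hybrid_exponential_stability_general
    (A : Matrix (Fin 6) (Fin 6) ℝ) (C : Matrix (Fin 3) (Fin 6) ℝ)
    (K : Matrix (Fin 6) (Fin 3) ℝ) (Tm TM : ℝ) (hTm : 0 < Tm)
    (P : Matrix (Fin 6) (Fin 6) ℝ) (hP : P.PosDef)
    (hLMI : ∀ τ ∈ Set.Icc Tm TM,
      (P - (1 - K * C)ᵀ * (NormedSpace.exp (τ • A))ᵀ * P *
        NormedSpace.exp (τ • A) * (1 - K * C)).PosDef)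
    -- admissible jump-time sequence
    (t : ℕ → ℝ) (ht0 : t 0 = 0)
    (hstep : ∀ k, Tm ≤ t (k + 1) - t k ∧ t (k + 1) - t k ≤ TM)
    -- solution arcs: `x k` is the state on `[t k, t (k+1)]`
    (x : ℕ → ℝ → Fin 6 → ℝ)
    (hflow : ∀ k, ∀ s ∈ Set.Icc (t k) (t (k + 1)),
      HasDerivAt (x k) (A.mulVec (x k s)) s)
    (hjump : ∀ k, x (k + 1) (t (k + 1)) = (1 - K * C).mulVec (x k (t (k + 1)))) :
    ∃ c lam : ℝ, 0 < c ∧ 0 < lam ∧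
      ∀ k, ∀ s ∈ Set.Icc (t k) (t (k + 1)),
        ‖x k s‖ ≤ c * Real.exp (-lam * s) * ‖x 0 0‖ := by
  have hTM₀ : 0 < TM := hTm.trans_le ((hstep 0).1.trans (hstep 0).2)
  obtain ⟨ρ, hρ₀, hρ₁, hρ⟩ := exists_lt_one_of_posDef_sub_transpose_mul_mul isCompact_Icc
    (H := fun τ ↦ NormedSpace.exp (τ • A) * (1 - K * C))
    ((continuous_exp_smul A).mul continuous_const) fun τ hτ ↦ by
      convert hLMI τ hτ using 2
      simp only [transpose_mul, Matrix.mul_assoc]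
  obtain ⟨m, hm, hlow⟩ := hP.exists_pos_mul_norm_sq_le
  obtain ⟨M, hM, hup⟩ := exists_le_mul_norm_sq_of_homogeneous (continuous_dotProduct_mulVec P)
    (smul_dotProduct_mulVec_smul P)
  obtain ⟨B, hB, hflowB⟩ := exists_norm_mulVec_le_of_continuousOn
    (isCompact_Icc (a := -TM) (b := TM)) (continuous_exp_smul A).continuousOn
  set r := √ρ
  have hr₀ : 0 < r := Real.sqrt_pos.2 hρ₀
  have hr₁ : r < 1 := by rw [Real.sqrt_lt' one_pos]; linarith
  have hbound := norm_hybrid_le_mul_pow hm hr₀.le hlow hup hB.le hflowB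
    (fun k ↦ by linarith [(hstep k).1]) (fun k ↦ (hstep k).2) hflow hjump fun k v ↦ by
      rw [Real.sq_sqrt hρ₀.le]
      exact hρ _ ⟨(hstep (k + 1)).1, (hstep (k + 1)).2⟩ v
  refine ⟨B * √(M / m) * B / r, -Real.log r / TM, by positivity,
    div_pos (neg_pos.2 (Real.log_neg hr₀ hr₁)) hTM₀, fun k s hs ↦ ?_⟩
  calc ‖x k s‖ ≤ B * √(M / m) * B * r ^ k * ‖x 0 0‖ := by simpa only [ht0] using hbound k s hs
    _ = B * √(M / m) * B / r * r ^ (k + 1) * ‖x 0 0‖ := by field_simp; ring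
    _ ≤ B * √(M / m) * B / r * Real.exp (-(-Real.log r / TM) * s) * ‖x 0 0‖ := by
        gcongr
        exact pow_le_exp_neg_mul_of_le_mul hr₀ hr₁.le hTM₀
          (hs.2.trans (le_natCast_mul_of_sub_le ht0 (fun k ↦ (hstep k).2) (k + 1)))

/-- Hybrid linear system `x' = Ax` between jumps and `x⁺ = (I - KC)x` at jump
times `t_k` with `T_m ≤ t_{k+1} - t_k ≤ T_M`. If there is a symmetric positive
definite `P` with `(I-KC)ᵀΦ(τ)ᵀPΦ(τ)(I-KC) - P ≺ 0` for all `τ ∈ [T_m, T_M]`,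
where `Φ(τ) = exp(Aτ)`, then every solution converges exponentially to zero. -/
theorem hybrid_exponential_stability
    (A : Matrix (Fin 6) (Fin 6) ℝ) (C : Matrix (Fin 3) (Fin 6) ℝ)
    (K : Matrix (Fin 6) (Fin 3) ℝ) (Tm TM : ℝ) (hTm : 0 < Tm) (hTM : Tm ≤ TM)
    (P : Matrix (Fin 6) (Fin 6) ℝ) (hPsym : Pᵀ = P) (hP : P.PosDef)
    (hLMI : ∀ τ ∈ Set.Icc Tm TM,
      (P - (1 - K * C)ᵀ * (NormedSpace.exp (τ • A))ᵀ * P *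
        NormedSpace.exp (τ • A) * (1 - K * C)).PosDef)
    -- admissible jump-time sequence
    (t : ℕ → ℝ) (ht0 : t 0 = 0)
    (hstep : ∀ k, Tm ≤ t (k + 1) - t k ∧ t (k + 1) - t k ≤ TM)
    -- solution arcs: `x k` is the state on `[t k, t (k+1)]`
    (x : ℕ → ℝ → Fin 6 → ℝ)
    (hflow : ∀ k, ∀ s ∈ Set.Icc (t k) (t (k + 1)),
      HasDerivAt (x k) (A.mulVec (x k s)) s)
    (hjump : ∀ k, x (k + 1) (t (k + 1)) = (1 - K * C).mulVec (x k (t (k + 1)))) :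
    ∃ c lam : ℝ, 0 < c ∧ 0 < lam ∧
      ∀ k, ∀ s ∈ Set.Icc (t k) (t (k + 1)),
        ‖x k s‖ ≤ c * Real.exp (-lam * s) * ‖x 0 0‖ :=
  hybrid_exponential_stability_general A C K Tm TM hTm P hP hLMI t ht0 hstep x hflow hjump
end

section
/- Let R̃ ∈ SO(3) and g ∈ R^3. Then ‖(I₃ - R̃)g‖ ≤ 2‖g‖·|R̃|_I, where |R̃|_I = sqrt(tr(I₃ - R̃)/4) is the normalized distance on SO(3). In particular the gravity disturbance term vanishes as R̃ → I₃. -/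
/-!
With `S = 1 - R` it suffices, after squaring, that `‖S g‖² ≤ tr S · ‖g‖²`. For a rotation, `4 (tr S ‖g‖² - ‖S g‖²)`
is the sum of squares `(a ⬝ g)² + ‖(R + Rᵀ + (1 - tr R) • 1) g‖²`, where `a = axialVec R` is the
axial vector of `R - Rᵀ`. This is a polynomial identity modulo `Rᵀ R = 1` and `adj R = Rᵀ`; the
latter is where `det R = 1` enters (a reflection violates the bound). In Rodrigues form
`R = cos θ • 1 + sin θ • [u]ₓ + (1 - cos θ) • u uᵀ` both squares are multiples of `(u ⬝ g)²`, so the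
bound is attained for `g ⟂ u`.
-/

open Matrix

theorem Matrix.adjugate_eq_transpose_of_orthogonal {n α : Type*} [Fintype n] [DecidableEq n]
    [CommRing α] {R : Matrix n n α} (hR : Rᵀ * R = 1) (hdet : R.det = 1) :
    R.adjugate = Rᵀ :=
  calc R.adjugate = Rᵀ * R * R.adjugate := by rw [hR, Matrix.one_mul]
    _ = Rᵀ := by rw [Matrix.mul_assoc, mul_adjugate, hdet, one_smul, Matrix.mul_one]

def axialVec (R : Matrix (Fin 3) (Fin 3) ℝ) : Fin 3 → ℝ :=
  ![R 2 1 - R 1 2, R 0 2 - R 2 0, R 1 0 - R 0 1]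

namespace SO3

variable {R : Matrix (Fin 3) (Fin 3) ℝ}

theorem four_mul_trace_mul_sub_eq (hR : SO3 R) (g : Fin 3 → ℝ) :
    4 * ((1 - R).trace * (g ⬝ᵥ g) - (1 - R) *ᵥ g ⬝ᵥ (1 - R) *ᵥ g) =
      (axialVec R ⬝ᵥ g) ^ 2 +
        (R + Rᵀ + (1 - R.trace) • 1) *ᵥ g ⬝ᵥ (R + Rᵀ + (1 - R.trace) • 1) *ᵥ g := by
  have horth := hR.1
  have hadj := adjugate_eq_transpose_of_orthogonal hR.1 hR.2.2
  rw [adjugate_fin_three, ← Matrix.ext_iff] at hadj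
  rw [← Matrix.ext_iff] at horth
  simp only [Fin.isValue, of_apply, cons_val', cons_val_fin_one, transpose_apply,
    Fin.forall_fin_succ, cons_val_zero, cons_val_succ, Fin.succ_zero_eq_one, Fin.succ_one_eq_two,
    IsEmpty.forall_iff, and_true, mul_apply, Fin.sum_univ_three, one_apply_eq, ne_eq,
    zero_ne_one, not_false_eq_true, one_apply_ne, Fin.reduceEq, Fin.succ_ne_zero] at hadj horth
  obtain ⟨⟨a00, a01, a02⟩, ⟨a10, a11, a12⟩, a20, a21, a22⟩ := hadj
  obtain ⟨⟨e00, e01, e02⟩, ⟨-, e11, e12⟩, -, -, e22⟩ := horth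
  simp only [trace, diag_apply, Matrix.sub_apply, one_apply, ↓reduceIte, Finset.sum_sub_distrib,
    Finset.sum_const, Finset.card_univ, Fintype.card_fin, nsmul_eq_mul, Nat.cast_ofNat, mul_one,
    Fin.sum_univ_three, Fin.isValue, dotProduct, mulVec, zero_ne_one, zero_sub, neg_mul,
    Fin.reduceEq, one_ne_zero, axialVec, cons_val_zero, cons_val_one, cons_val, Matrix.add_apply,
    transpose_apply, Matrix.smul_apply, smul_eq_mul, mul_ite, mul_zero, add_zero]
  linear_combination (-5 * g 0 ^ 2 - g 1 ^ 2 - g 2 ^ 2) * e00 +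
    (-(g 0 ^ 2) - 5 * g 1 ^ 2 - g 2 ^ 2) * e11 + (-(g 0 ^ 2) - g 1 ^ 2 - 5 * g 2 ^ 2) * e22 +
    (-8 * g 0 * g 1) * e01 + (-8 * g 0 * g 2) * e02 + (-8 * g 1 * g 2) * e12 +
    (-2 * g 0 ^ 2 + 2 * g 1 ^ 2 + 2 * g 2 ^ 2) * a00 +
    (2 * g 0 ^ 2 - 2 * g 1 ^ 2 + 2 * g 2 ^ 2) * a11 +
    (2 * g 0 ^ 2 + 2 * g 1 ^ 2 - 2 * g 2 ^ 2) * a22 +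
    (-4 * g 0 * g 1) * (a01 + a10) + (-4 * g 0 * g 2) * (a02 + a20) +
    (-4 * g 1 * g 2) * (a12 + a21)

theorem mulVec_dotProduct_mulVec_le (hR : SO3 R) (g : Fin 3 → ℝ) :
    (1 - R) *ᵥ g ⬝ᵥ (1 - R) *ᵥ g ≤ (g ⬝ᵥ g) * (1 - R).trace := by
  have hsos := hR.four_mul_trace_mul_sub_eq g
  have hsq := dotProduct_self_star_nonneg ((R + Rᵀ + (1 - R.trace) • 1) *ᵥ g)
  rw [star_trivial] at hsq
  nlinarith [sq_nonneg (axialVec R ⬝ᵥ g)]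

end SO3

/-- For `R̃ ∈ SO(3)` and `g ∈ ℝ³`, `‖(I - R̃)g‖ ≤ 2‖g‖·|R̃|_I`, where
`|R̃|_I = √(tr(I - R̃)/4)` and Euclidean norms are written via dot products. -/
theorem gravity_disturbance_bound (Rt : Matrix (Fin 3) (Fin 3) ℝ)
    (hR : SO3 Rt) (g : Fin 3 → ℝ) :
    Real.sqrt (((1 - Rt).mulVec g) ⬝ᵥ ((1 - Rt).mulVec g)) ≤
      2 * Real.sqrt (g ⬝ᵥ g) * Real.sqrt ((1 - Rt).trace / 4) := by
  have hg : 0 ≤ g ⬝ᵥ g := by simpa using dotProduct_self_star_nonneg g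
  have hsqrt4 : √(4 : ℝ) = 2 := (Real.sqrt_eq_iff_mul_self_eq_of_pos two_pos).mpr (by norm_num)
  calc √((1 - Rt) *ᵥ g ⬝ᵥ (1 - Rt) *ᵥ g) ≤ √((g ⬝ᵥ g) * (1 - Rt).trace) :=
        Real.sqrt_le_sqrt (hR.mulVec_dotProduct_mulVec_le g)
    _ = 2 * √(g ⬝ᵥ g) * √((1 - Rt).trace / 4) := by
        rw [Real.sqrt_mul hg, Real.sqrt_div' _ zero_le_four, hsqrt4]
        ring
end
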